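/- arXiv:2108.04113 — 7 statements merged into one kernel-verified Lean document; each statement's English description precedes it below -/
import Mathlib

section
/- For all nonnegative integers m and n, the sum S(m,n) = \sum_{k=1}^{n} k^m F_k equals the m-th derivative with respect to y, evaluated at y = 0, of the real function y \mapsto (e^{y(n+2)} F_n + e^{y(n+1)} F_{n+1} - e^{y}) / (e^{2y} + e^{y} - 1). -/
/-!
For `x = e^y` the quotient is `(x^(n+2) F_n + x^(n+1) F_(n+1) - x) / (x^2 + x - 1)`, and since
`F_k + F_(k+1) = F_(k+2)` the product `(∑_{k=1}^n F_k x^k) (x^2 + x - 1)` telescopes to exactly that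
numerator. Near `y = 0` the function is therefore `∑_{k=1}^n F_k e^(k y)`, whose `m`-th derivative
at `0` is `∑_{k=1}^n k^m F_k`.
-/

/-- Fibonacci numbers over the integers, `F_{-n} = (-1)^{n-1} F_n`. -/
def fibZ (n : ℤ) : ℤ :=
  if 0 ≤ n then (Nat.fib n.toNat : ℤ)
  else (-1) ^ ((-n).toNat + 1) * (Nat.fib (-n).toNat : ℤ)

open Finset Real Filter Topology

@[simp]
lemma fibZ_natCast (k : ℕ) : fibZ k = Nat.fib k := by
  simp [fibZ]

theorem iteratedDeriv_sum_mul_exp {ι : Type*} (m : ℕ) (s : Finset ι) (c a : ι → ℝ) (y : ℝ) :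
    iteratedDeriv m (fun y => ∑ i ∈ s, c i * exp (a i * y)) y =
      ∑ i ∈ s, c i * a i ^ m * exp (a i * y) := by
  rw [iteratedDeriv_fun_sum fun i _ => by fun_prop]
  refine sum_congr rfl fun i _ => ?_
  rw [iteratedDeriv_const_mul_field, iteratedDeriv_exp_const_mul, mul_assoc]

theorem sum_fib_mul_pow_mul {R : Type*} [CommRing R] (x : R) (n : ℕ) :
    (∑ k ∈ Icc 1 n, (Nat.fib k : R) * x ^ k) * (x ^ 2 + x - 1) =
      x ^ (n + 2) * Nat.fib n + x ^ (n + 1) * Nat.fib (n + 1) - x := by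
  induction n with
  | zero => simp
  | succ n ih =>
    rw [sum_Icc_succ_top (by omega), add_mul, ih, Nat.fib_add_two]
    push_cast
    ring

theorem fib_exp_quotient_eventuallyEq (n : ℕ) :
    (fun y : ℝ =>
        (exp (y * (n + 2)) * (fibZ n : ℝ) + exp (y * (n + 1)) * (fibZ (n + 1) : ℝ)
            - exp y) / (exp (2 * y) + exp y - 1)) =ᶠ[𝓝 0]
      fun y => ∑ k ∈ Icc 1 n, (Nat.fib k : ℝ) * exp (k * y) := by
  have hden : ∀ᶠ y in 𝓝 (0 : ℝ), exp (2 * y) + exp y - 1 ≠ 0 :=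
    (by fun_prop : Continuous fun y : ℝ => exp (2 * y) + exp y - 1).continuousAt.eventually_ne
      (by norm_num)
  filter_upwards [hden] with y hy
  have hfib : (fibZ (n + 1) : ℝ) = Nat.fib (n + 1) := by exact_mod_cast fibZ_natCast (n + 1)
  have hpow (k : ℕ) : exp (k * y) = exp y ^ k := exp_nat_mul y k
  have hpow_two : exp (2 * y) = exp y ^ 2 := by exact_mod_cast hpow 2
  have hpow_n_one : exp (y * (n + 1)) = exp y ^ (n + 1) := by
    rw [mul_comm]; exact_mod_cast hpow (n + 1)
  have hpow_n_two : exp (y * (n + 2)) = exp y ^ (n + 2) := by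
    rw [mul_comm]; exact_mod_cast hpow (n + 2)
  rw [div_eq_iff hy, hfib, fibZ_natCast, Int.cast_natCast, hpow_n_one, hpow_n_two, hpow_two,
    eq_comm]
  simp only [hpow, sum_fib_mul_pow_mul]

theorem ledin_fib_derivative (m n : ℕ) :
    (∑ k ∈ Finset.Icc 1 n, (k : ℝ) ^ m * (fibZ k : ℝ)) =
      iteratedDeriv m (fun y : ℝ =>
        (Real.exp (y * (n + 2)) * (fibZ n : ℝ) + Real.exp (y * (n + 1)) * (fibZ (n + 1) : ℝ)
            - Real.exp y) / (Real.exp (2 * y) + Real.exp y - 1)) 0 := by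
  rw [(fib_exp_quotient_eventuallyEq n).iteratedDeriv_eq, iteratedDeriv_sum_mul_exp]
  simp [mul_comm]
end

section
/- Let P1, P2 : \mathbb{N} \times \mathbb{N} \to \mathbb{Z} and K : \mathbb{N} \to \mathbb{Z} satisfy, for all nonnegative integers m and n: P1(m,n) = (n+2)^m - \sum_{j=0}^{m-1} \binom{m}{j} (2^{m-j} + 1) P1(j,n), P2(m,n) = (n+1)^m - \sum_{j=0}^{m-1} \binom{m}{j} (2^{m-j} + 1) P2(j,n), and K(m) = -(2^{m+1} + 1) - \sum_{j=0}^{m-1} \binom{m}{j} (2^{m-j} + 1) K(j) (empty sums when m = 0). Then for all nonnegative integers m and n: \sum_{k=1}^{n} k^m L_k = P1(m,n) L_n + P2(m,n) L_{n+1} + K(m). -/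
/-- Lucas numbers over the integers, `L_{-n} = (-1)^n L_n`. -/
def lucasZ (n : ℤ) : ℤ := fibZ (n - 1) + fibZ (n + 1)

open Finset

theorem fibZ_eq_fib : fibZ = Int.fib := by
  funext n
  obtain ⟨k, rfl | rfl⟩ := n.eq_nat_or_neg
  · simp [fibZ]
  · rcases k with _ | k
    · simp [fibZ]
    · rw [Int.fib_neg_natCast, fibZ, if_neg (by omega), neg_neg, Int.toNat_natCast]

theorem lucasZ_add_two (n : ℤ) : lucasZ (n + 2) = lucasZ n + lucasZ (n + 1) := by
  simp only [lucasZ, fibZ_eq_fib]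
  have h1 := Int.fib_add_two (n - 1)
  have h2 := Int.fib_add_two (n + 1)
  ring_nf at h1 h2 ⊢
  linear_combination h1 + h2

theorem lucasZ_zero : lucasZ 0 = 2 := by
  simp [lucasZ, fibZ_eq_fib]

theorem lucasZ_one : lucasZ 1 = 1 := by
  norm_num [lucasZ, fibZ_eq_fib]

section Unitriangular

variable {R : Type*} [CommRing R] (c : ℕ → ℕ → R)

def unitriangularOp : (ℕ → R) →ₗ[R] (ℕ → R) where
  toFun f m := f m + ∑ j ∈ range m, c m j * f j
  map_add' f g := by
    funext m
    simp only [Pi.add_apply, mul_add, sum_add_distrib]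
    ring
  map_smul' a f := by
    funext m
    simp only [Pi.smul_apply, smul_eq_mul, RingHom.id_apply, mul_add, mul_sum]
    congr 1
    exact sum_congr rfl fun j _ => mul_left_comm _ _ _

@[simp]
theorem unitriangularOp_apply (f : ℕ → R) (m : ℕ) :
    unitriangularOp c f m = f m + ∑ j ∈ range m, c m j * f j :=
  rfl

theorem unitriangularOp_injective : Function.Injective (unitriangularOp c) := by
  intro f g hfg
  funext m
  induction m using Nat.strong_induction_on with
  | _ m ih =>
    have hm := congrFun hfg m
    rw [unitriangularOp_apply, unitriangularOp_apply,
      sum_congr rfl fun j hj => by rw [ih j (mem_range.1 hj)]] at hm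
    exact add_right_cancel hm

theorem unitriangularOp_eq_of_forall {f g : ℕ → R}
    (h : ∀ m, f m = g m - ∑ j ∈ range m, c m j * f j) : unitriangularOp c f = g := by
  funext m
  rw [unitriangularOp_apply]
  linear_combination h m

end Unitriangular

def ledinCoeff (R : Type*) [CommRing R] (m j : ℕ) : R := m.choose j * (2 ^ (m - j) + 1)

theorem unitriangularOp_ledinCoeff_pow {R : Type*} [CommRing R] (x : R) :
    unitriangularOp (ledinCoeff R) (x ^ ·) = fun m => (x + 2) ^ m + (x + 1) ^ m - x ^ m := by
  funext m
  have hbinom : ∑ j ∈ range (m + 1), ledinCoeff R m j * x ^ j = (x + 2) ^ m + (x + 1) ^ m := by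
    rw [add_pow, add_pow, ← sum_add_distrib]
    exact sum_congr rfl fun j _ => by simp only [ledinCoeff]; ring
  rw [sum_range_succ] at hbinom
  simp only [ledinCoeff, Nat.choose_self, Nat.sub_self, pow_zero] at hbinom
  simp only [unitriangularOp_apply, ledinCoeff]
  linear_combination hbinom

theorem sum_Icc_mul_eq_of_fib_recurrence {R : Type*} [CommRing R] {L w a b : ℕ → R}
    (hL : ∀ n, L (n + 2) = L n + L (n + 1)) (hb : ∀ n, b (n + 1) = a n)
    (ha : ∀ n, a (n + 1) + a n - b n = w (n + 1)) (n : ℕ) :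
    ∑ k ∈ Icc 1 n, w k * L k = a n * L n + b n * L (n + 1) - (a 0 * L 0 + b 0 * L 1) := by
  induction n with
  | zero => simp
  | succ n ih =>
    rw [sum_Icc_succ_top (by omega), ih, hb, hL]
    linear_combination (-L (n + 1)) * ha n

section LedinCoefficients

variable {P1 P2 : ℕ → ℕ → ℤ}

theorem P2_succ_eq_P1
    (hP1 : ∀ n : ℕ, unitriangularOp (ledinCoeff ℤ) (P1 · n) = fun m => ((n : ℤ) + 2) ^ m)
    (hP2 : ∀ n : ℕ, unitriangularOp (ledinCoeff ℤ) (P2 · n) = fun m => ((n : ℤ) + 1) ^ m)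
    (n m : ℕ) : P2 m (n + 1) = P1 m n := by
  suffices (P2 · (n + 1)) = (P1 · n) from congrFun this m
  apply unitriangularOp_injective
  rw [hP2, hP1]
  push_cast
  ring_nf

theorem P1_succ_add_P1_sub_P2
    (hP1 : ∀ n : ℕ, unitriangularOp (ledinCoeff ℤ) (P1 · n) = fun m => ((n : ℤ) + 2) ^ m)
    (hP2 : ∀ n : ℕ, unitriangularOp (ledinCoeff ℤ) (P2 · n) = fun m => ((n : ℤ) + 1) ^ m)
    (n m : ℕ) : P1 m (n + 1) + P1 m n - P2 m n = ((n : ℤ) + 1) ^ m := by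
  suffices (P1 · (n + 1)) + (P1 · n) - (P2 · n) = fun m => ((n : ℤ) + 1) ^ m from
    congrFun this m
  apply unitriangularOp_injective
  rw [map_sub, map_add, hP1, hP1, hP2, unitriangularOp_ledinCoeff_pow]
  funext m
  simp only [Pi.add_apply, Pi.sub_apply]
  push_cast
  ring

theorem two_mul_P1_zero_add_P2_zero_add_K {K : ℕ → ℤ}
    (hP1 : unitriangularOp (ledinCoeff ℤ) (P1 · 0) = fun m => 2 ^ m)
    (hP2 : unitriangularOp (ledinCoeff ℤ) (P2 · 0) = fun _ => 1)
    (hK : unitriangularOp (ledinCoeff ℤ) K = fun m => -(2 ^ (m + 1) + 1)) (m : ℕ) :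
    2 * P1 m 0 + P2 m 0 + K m = 0 := by
  suffices (2 : ℤ) • (P1 · 0) + (P2 · 0) + K = 0 by simpa using congrFun this m
  apply unitriangularOp_injective
  rw [map_add, map_add, map_smul, hP1, hP2, hK, map_zero]
  funext m
  simp only [Pi.add_apply, Pi.smul_apply, smul_eq_mul, Pi.zero_apply]
  ring

end LedinCoefficients

theorem ledin_lucas_recursive (P1 P2 : ℕ → ℕ → ℤ) (K : ℕ → ℤ)
    (hP1 : ∀ m n : ℕ, P1 m n =
      ((n : ℤ) + 2) ^ m - ∑ j ∈ Finset.range m, (m.choose j : ℤ) * (2 ^ (m - j) + 1) * P1 j n)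
    (hP2 : ∀ m n : ℕ, P2 m n =
      ((n : ℤ) + 1) ^ m - ∑ j ∈ Finset.range m, (m.choose j : ℤ) * (2 ^ (m - j) + 1) * P2 j n)
    (hK : ∀ m : ℕ, K m =
      -(2 ^ (m + 1) + 1) - ∑ j ∈ Finset.range m, (m.choose j : ℤ) * (2 ^ (m - j) + 1) * K j) :
    ∀ m n : ℕ, (∑ k ∈ Finset.Icc 1 n, (k : ℤ) ^ m * lucasZ k) =
      P1 m n * lucasZ n + P2 m n * lucasZ (n + 1) + K m := by
  have hTP1 (n : ℕ) : unitriangularOp (ledinCoeff ℤ) (P1 · n) = fun m => ((n : ℤ) + 2) ^ m :=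
    unitriangularOp_eq_of_forall _ (hP1 · n)
  have hTP2 (n : ℕ) : unitriangularOp (ledinCoeff ℤ) (P2 · n) = fun m => ((n : ℤ) + 1) ^ m :=
    unitriangularOp_eq_of_forall _ (hP2 · n)
  have hTK : unitriangularOp (ledinCoeff ℤ) K = fun m => -(2 ^ (m + 1) + 1) :=
    unitriangularOp_eq_of_forall _ hK
  intro m n
  have hsum := sum_Icc_mul_eq_of_fib_recurrence (L := fun k : ℕ => lucasZ k)
    (w := fun k : ℕ => (k : ℤ) ^ m) (a := (P1 m ·)) (b := (P2 m ·))
    (fun k => by push_cast; exact lucasZ_add_two k) (fun k => P2_succ_eq_P1 hTP1 hTP2 k m)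
    (fun k => by simpa using P1_succ_add_P1_sub_P2 hTP1 hTP2 k m) n
  simp only [Nat.cast_zero, Nat.cast_one, Nat.cast_add, lucasZ_zero, lucasZ_one] at hsum
  have hK0 := two_mul_P1_zero_add_P2_zero_add_K
    (by simpa using hTP1 0) (by simpa using hTP2 0) hTK m
  linear_combination hsum - hK0
end

section
/- For every nonnegative integer j and every integer s: \alpha^s A_j(\alpha) - \beta^s A_j(\beta) = \sqrt{5} \sum_{t=0}^{j} A(j,t) F_{t+s}, where \alpha^s and \beta^s denote integer powers (\beta \neq 0, so negative powers are defined). -/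
/-- The Eulerian numbers `A(i,j) = ∑_{t=0}^{j} (-1)^t C(i+1,t) (j-t)^i`. -/
def eulerianA (i j : ℕ) : ℤ :=
  ∑ t ∈ Finset.range (j + 1), (-1 : ℤ) ^ t * (Nat.choose (i + 1) t) * ((j - t : ℕ) ^ i : ℤ)

/-- The Eulerian polynomial `A_i(x) = ∑_{j=0}^{i} A(i,j) x^j` over the reals. -/
noncomputable def eulerianPoly (i : ℕ) (x : ℝ) : ℝ :=
  ∑ j ∈ Finset.range (i + 1), (eulerianA i j : ℝ) * x ^ j

/-!
By Binet's formula `φ ^ n - ψ ^ n = √5 F_n`, valid for every integer `n`, the left-hand side is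
`∑_t A(j,t) (φ ^ (t + s) - ψ ^ (t + s)) = √5 ∑_t A(j,t) F_{t+s}`. Nothing about the Eulerian
numbers is used: the identity holds for any polynomial in place of `A_j`.
-/

open Real goldenRatio

theorem fibZ_eq_intFib (n : ℤ) : fibZ n = Int.fib n := by
  obtain ⟨m, rfl | rfl⟩ := n.eq_nat_or_neg
  · simp [fibZ]
  · rcases m.eq_zero_or_pos with rfl | _ <;> simp [fibZ, Int.fib_neg_natCast]

theorem goldenRatio_zpow_sub_goldenConj_zpow (n : ℤ) : φ ^ n - ψ ^ n = √5 * fibZ n := by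
  rw [fibZ_eq_intFib, coe_intFib_eq, mul_div_cancel₀ _ (by positivity)]

theorem goldenRatio_zpow_mul_sum_sub_goldenConj_zpow_mul_sum
    (s : ℤ) (m : ℕ) (c : ℕ → ℝ) :
    φ ^ s * ∑ t ∈ Finset.range m, c t * φ ^ t - ψ ^ s * ∑ t ∈ Finset.range m, c t * ψ ^ t =
      √5 * ∑ t ∈ Finset.range m, c t * fibZ (t + s) := by
  simp only [Finset.mul_sum, ← Finset.sum_sub_distrib]
  refine Finset.sum_congr rfl fun t _ => ?_
  rw [mul_left_comm √5, ← goldenRatio_zpow_sub_goldenConj_zpow, zpow_add₀ goldenRatio_ne_zero,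
    zpow_add₀ goldenConj_ne_zero, zpow_natCast, zpow_natCast]
  ring

theorem eulerian_poly_fib_identity (j : ℕ) (s : ℤ) :
    ((1 + Real.sqrt 5) / 2) ^ s * eulerianPoly j ((1 + Real.sqrt 5) / 2)
      - ((1 - Real.sqrt 5) / 2) ^ s * eulerianPoly j ((1 - Real.sqrt 5) / 2) =
      Real.sqrt 5 * ∑ t ∈ Finset.range (j + 1), (eulerianA j t : ℝ) * (fibZ (t + s) : ℝ) :=
  goldenRatio_zpow_mul_sum_sub_goldenConj_zpow_mul_sum s (j + 1) _
end

section
/- Let a, b, p, q be complex numbers with p \neq 0, q \neq 0 and p \neq q + 1, and let (w_j) be the Horadam sequence with w_0 = a, w_1 = b, w_j = p w_{j-1} - q w_{j-2}. Suppose \mathcal{P}_1, \mathcal{P}_2 : \mathbb{N} \times \mathbb{N} \to \mathbb{C} and \mathcal{C} : \mathbb{N} \to \mathbb{C} satisfy, for all nonnegative integers m and n: (q - p + 1)\mathcal{P}_1(m,n) = (n+2)^m q - \sum_{j=0}^{m-1} \binom{m}{j} (2^{m-j} q - p) \mathcal{P}_1(j,n), (q - p + 1)\mathcal{P}_2(m,n)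 = -(n+1)^m - \sum_{j=0}^{m-1} \binom{m}{j} (2^{m-j} q - p) \mathcal{P}_2(j,n), and (q - p + 1)\mathcal{C}(m) = -2^m a q + b - \sum_{j=0}^{m-1} \binom{m}{j} (2^{m-j} q - p) \mathcal{C}(j) (empty sums when m = 0). Then for all nonnegative integers m and n: \sum_{k=1}^{n} k^m w_k = \mathcal{P}_1(m,n) w_n + \mathcal{P}_2(m,n) w_{n+1} + \mathcal{C}(m). -/
/-!
Each of `m ↦ P1 m n`, `m ↦ P2 m n` and `C` is determined by a triangular linear system in `m`:
it is the preimage of an explicit sequence under the operator `ledinOp p q`, which is injective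
when `q - p + 1 ≠ 0`. Comparing right-hand sides therefore gives the identities
`P1 m n = -q P2 m (n+1)`, `P1 m (n+1) + p P2 m (n+1) = P2 m n + (n+1)^m` and
`a P1 m 0 + b P2 m 0 + C m = 0`; the first two are exactly what makes the sum telescope
along the recurrence `w (n+2) = p w (n+1) - q w n`, and the third fixes the constant.
-/

open Finset

section LedinOperator

variable {R : Type*} [CommRing R] (p q : R)

/-- The hypotheses on `P1`, `P2` and `C` say `ledinOp p q f = g` for the respective `f`, `g`. -/
def ledinOp : (ℕ → R) →ₗ[R] (ℕ → R) where
  toFun f m := (q - p + 1) * f m + ∑ j ∈ range m, (m.choose j : R) * (2 ^ (m - j) * q - p) * f j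
  map_add' f g := by
    funext m
    simp only [Pi.add_apply, mul_add, sum_add_distrib]
    ring
  map_smul' c f := by
    funext m
    simp only [Pi.smul_apply, smul_eq_mul, RingHom.id_apply]
    rw [mul_add, mul_sum]
    congr 1
    · ring
    · exact sum_congr rfl fun _ _ => by ring

variable {p q}

theorem ledinOp_eq_iff {f g : ℕ → R} :
    ledinOp p q f = g ↔ ∀ m, (q - p + 1) * f m =
      g m - ∑ j ∈ range m, (m.choose j : R) * (2 ^ (m - j) * q - p) * f j := by
  simp only [funext_iff, eq_sub_iff_add_eq]
  rfl

theorem ledinOp_pow (x : R) :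
    ledinOp p q (fun m => x ^ m) = fun m => q * (x + 2) ^ m - p * (x + 1) ^ m + x ^ m := by
  funext m
  have binom (y : R) :
      ∑ j ∈ range m, (m.choose j : R) * y ^ (m - j) * x ^ j = (x + y) ^ m - x ^ m := by
    rw [add_pow, sum_range_succ, Nat.choose_self, Nat.sub_self]
    simp only [pow_zero, mul_one, Nat.cast_one, add_sub_cancel_right]
    exact sum_congr rfl fun _ _ => by ring
  have split : ∑ j ∈ range m, (m.choose j : R) * (2 ^ (m - j) * q - p) * x ^ j =
      q * ∑ j ∈ range m, (m.choose j : R) * 2 ^ (m - j) * x ^ j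
        - p * ∑ j ∈ range m, (m.choose j : R) * 1 ^ (m - j) * x ^ j := by
    rw [mul_sum, mul_sum, ← sum_sub_distrib]
    exact sum_congr rfl fun _ _ => by ring
  change (q - p + 1) * x ^ m + _ = _
  rw [split, binom, binom]
  ring

theorem ledinOp_injective [IsDomain R] (hpq : q - p + 1 ≠ 0) :
    Function.Injective (ledinOp p q) := by
  refine (injective_iff_map_eq_zero _).mpr fun f hf => funext fun m => ?_
  induction m using Nat.strong_induction_on with
  | _ m ih =>
    have hm := ledinOp_eq_iff.mp hf m
    rw [sum_eq_zero fun j hj => by rw [ih j (mem_range.mp hj), Pi.zero_apply, mul_zero]] at hm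
    simpa [hpq] using hm

end LedinOperator

theorem sum_Icc_mul_horadam {R : Type*} [CommRing R] {p q : R} {w : ℕ → R}
    (hw : ∀ j, w (j + 2) = p * w (j + 1) - q * w j) {c A B : ℕ → R}
    (hA : ∀ n, A n = -q * B (n + 1)) (hB : ∀ n, A (n + 1) + p * B (n + 1) = B n + c (n + 1))
    (n : ℕ) :
    ∑ k ∈ Icc 1 n, c k * w k = A n * w n + B n * w (n + 1) - (A 0 * w 0 + B 0 * w 1) := by
  induction n with
  | zero => simp
  | succ n ih =>
    rw [sum_Icc_succ_top (Nat.le_add_left 1 n), ih, hw]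
    linear_combination w n * hA n - w (n + 1) * hB n

theorem horadam_ledin_form_general (a b p q : ℂ) (hpq : p ≠ q + 1)
    (w : ℕ → ℂ) (hw0 : w 0 = a) (hw1 : w 1 = b)
    (hw : ∀ j : ℕ, w (j + 2) = p * w (j + 1) - q * w j)
    (P1 P2 : ℕ → ℕ → ℂ) (C : ℕ → ℂ)
    (hP1 : ∀ m n : ℕ, (q - p + 1) * P1 m n = ((n : ℂ) + 2) ^ m * q
      - ∑ j ∈ Finset.range m, (m.choose j : ℂ) * (2 ^ (m - j) * q - p) * P1 j n)
    (hP2 : ∀ m n : ℕ, (q - p + 1) * P2 m n = -((n : ℂ) + 1) ^ m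
      - ∑ j ∈ Finset.range m, (m.choose j : ℂ) * (2 ^ (m - j) * q - p) * P2 j n)
    (hC : ∀ m : ℕ, (q - p + 1) * C m = -2 ^ m * a * q + b
      - ∑ j ∈ Finset.range m, (m.choose j : ℂ) * (2 ^ (m - j) * q - p) * C j) :
    ∀ m n : ℕ, (∑ k ∈ Finset.Icc 1 n, (k : ℂ) ^ m * w k) =
      P1 m n * w n + P2 m n * w (n + 1) + C m := by
  have inj := ledinOp_injective (p := p) (q := q) fun h => hpq (by linear_combination -h)
  have op_P1 n := ledinOp_eq_iff.mpr (hP1 · n)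
  have op_P2 n := ledinOp_eq_iff.mpr (hP2 · n)
  have op_C := ledinOp_eq_iff.mpr hC
  have P1_eq (n : ℕ) : (P1 · n) = -q • (P2 · (n + 1)) := inj <| by
    rw [map_smul, op_P1, op_P2]
    funext m
    simp only [Pi.smul_apply, smul_eq_mul]
    push_cast
    ring
  have P1_succ (n : ℕ) :
      (P1 · (n + 1)) + p • (P2 · (n + 1)) - (P2 · n) = fun m => ((n : ℂ) + 1) ^ m := inj <| by
    rw [map_sub, map_add, map_smul, op_P1, op_P2, op_P2, ledinOp_pow]
    funext m
    simp only [Pi.add_apply, Pi.sub_apply, Pi.smul_apply, smul_eq_mul]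
    push_cast
    ring
  have C_eq : a • (P1 · 0) + b • (P2 · 0) + C = 0 := inj <| by
    rw [map_add, map_add, map_smul, map_smul, op_P1, op_P2, op_C, map_zero]
    funext m
    simp only [Pi.add_apply, Pi.smul_apply, smul_eq_mul, Pi.zero_apply]
    push_cast
    ring
  intro m n
  rw [sum_Icc_mul_horadam hw (c := fun k => (k : ℂ) ^ m) (A := (P1 m ·)) (B := (P2 m ·))
    (fun n => congrFun (P1_eq n) m)
    (fun n => by simpa [sub_eq_iff_eq_add'] using congrFun (P1_succ n) m)]
  have hCm := congrFun C_eq m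
  simp only [Pi.add_apply, Pi.smul_apply, smul_eq_mul, Pi.zero_apply] at hCm
  rw [hw0, hw1]
  linear_combination -hCm

theorem horadam_ledin_form (a b p q : ℂ) (hp : p ≠ 0) (hq : q ≠ 0) (hpq : p ≠ q + 1)
    (w : ℕ → ℂ) (hw0 : w 0 = a) (hw1 : w 1 = b)
    (hw : ∀ j : ℕ, w (j + 2) = p * w (j + 1) - q * w j)
    (P1 P2 : ℕ → ℕ → ℂ) (C : ℕ → ℂ)
    (hP1 : ∀ m n : ℕ, (q - p + 1) * P1 m n = ((n : ℂ) + 2) ^ m * q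
      - ∑ j ∈ Finset.range m, (m.choose j : ℂ) * (2 ^ (m - j) * q - p) * P1 j n)
    (hP2 : ∀ m n : ℕ, (q - p + 1) * P2 m n = -((n : ℂ) + 1) ^ m
      - ∑ j ∈ Finset.range m, (m.choose j : ℂ) * (2 ^ (m - j) * q - p) * P2 j n)
    (hC : ∀ m : ℕ, (q - p + 1) * C m = -2 ^ m * a * q + b
      - ∑ j ∈ Finset.range m, (m.choose j : ℂ) * (2 ^ (m - j) * q - p) * C j) :
    ∀ m n : ℕ, (∑ k ∈ Finset.Icc 1 n, (k : ℂ) ^ m * w k) =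
      P1 m n * w n + P2 m n * w (n + 1) + C m :=
  horadam_ledin_form_general a b p q hpq w hw0 hw1 hw P1 P2 C hP1 hP2 hC
end

section
/- Let q be a nonzero complex number, let \delta be a complex number with \delta^2 = 1 - 4q and \delta \neq 0, and set \tau = (1+\delta)/2, \sigma = (1-\delta)/2, \Delta = \tau - \sigma = \delta, \mathbb{A} = (b - a\sigma)/\Delta, \mathbb{B} = (a\tau - b)/\Delta, where a, b are complex numbers. Then for every nonnegative integer s: \mathbb{A} A_s(\tau) + \mathbb{B} A_s(\sigma) = \sum_{t=0}^{s} A(s,t) w^*_t and \mathbb{A} A_s(\tau) - \mathbb{B} A_s(\sigma) = (1/\Delta) \sum_{t=0}^{s} A(s,t) (w^*_{t+1} - q w^*_{t-1}). -/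
/-- The Eulerian polynomial `A_i(x) = ∑_{j=0}^{i} A(i,j) x^j` over the complex numbers. -/
noncomputable def eulerianPolyC (i : ℕ) (x : ℂ) : ℂ :=
  ∑ j ∈ Finset.range (i + 1), (eulerianA i j : ℂ) * x ^ j

/-!
With `τ, σ` the roots of `x² - x + q`, Binet's formula gives `w*_n = 𝔸 τⁿ + 𝔹 σⁿ` for `n ≥ 0`,
and `w*_{n+1} - q w*_{n-1} = Δ (𝔸 τⁿ - 𝔹 σⁿ)`, where for `n = 0` the term `q w*_{-1}` is read off
the recurrence at index `1`. Both identities are these closed forms summed against the Eulerian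
numbers, which enter only as coefficients.
-/

theorem binet_of_two_step_rec {K : Type*} [Field K] {τ σ : K} (hτσ : τ ≠ σ) {u : ℕ → K}
    (hu : ∀ n, u (n + 2) = (τ + σ) * u (n + 1) - τ * σ * u n) (n : ℕ) :
    u n = (u 1 - u 0 * σ) / (τ - σ) * τ ^ n + (u 0 * τ - u 1) / (τ - σ) * σ ^ n := by
  have hne : τ - σ ≠ 0 := sub_ne_zero.mpr hτσ
  induction n using Nat.twoStepInduction with
  | zero => field_simp; ring
  | one => field_simp; ring
  | more n ih₀ ih₁ => rw [hu, ih₀, ih₁]; ring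

section WStar

variable {K : Type*} [Field K] {q τ σ : K} {w : ℤ → K}

theorem wstar_eq_binet (hτσ : τ ≠ σ) (hadd : τ + σ = 1) (hmul : τ * σ = q)
    (hw : ∀ j : ℤ, w j = w (j - 1) - q * w (j - 2)) (n : ℕ) :
    w n = (w 1 - w 0 * σ) / (τ - σ) * τ ^ n + (w 0 * τ - w 1) / (τ - σ) * σ ^ n := by
  have hrec (n : ℕ) : w (n + 2 : ℕ) = (τ + σ) * w (n + 1 : ℕ) - τ * σ * w n := by
    rw [hadd, hmul, one_mul, hw]
    push_cast
    ring_nf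
  simpa only [Nat.cast_zero, Nat.cast_one] using
    binet_of_two_step_rec (u := fun n : ℕ => w n) hτσ hrec n

theorem wstar_add_one_sub_mul_wstar_sub_one (hτσ : τ ≠ σ) (hadd : τ + σ = 1)
    (hmul : τ * σ = q) (hw : ∀ j : ℤ, w j = w (j - 1) - q * w (j - 2)) (n : ℕ) :
    w (n + 1) - q * w (n - 1) = (w 1 - w 0 * σ) * τ ^ n - (w 0 * τ - w 1) * σ ^ n := by
  cases n with
  | zero =>
    have h₁ : w 1 = w 0 - q * w (-1) := hw 1
    simp only [Nat.cast_zero, zero_add, zero_sub, pow_zero, mul_one]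
    linear_combination w 0 * hadd - h₁
  | succ k =>
    have hne : τ - σ ≠ 0 := sub_ne_zero.mpr hτσ
    have hk : ((k + 1 : ℕ) : ℤ) - 1 = k := by push_cast; ring
    rw [hk, ← Nat.cast_add_one, wstar_eq_binet hτσ hadd hmul hw, wstar_eq_binet hτσ hadd hmul hw,
      ← hmul]
    field_simp
    ring

end WStar

theorem mul_eulerianPolyC_add_mul_eulerianPolyC (s : ℕ) (α β τ σ : ℂ) :
    α * eulerianPolyC s τ + β * eulerianPolyC s σ =
      ∑ t ∈ Finset.range (s + 1), (eulerianA s t : ℂ) * (α * τ ^ t + β * σ ^ t) := by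
  simp only [eulerianPolyC, Finset.mul_sum, ← Finset.sum_add_distrib]
  exact Finset.sum_congr rfl fun t _ => by ring

theorem eulerian_poly_wstar_identities_general (a b q δ : ℂ)
    (hδ : δ ^ 2 = 1 - 4 * q) (hδ0 : δ ≠ 0)
    (w : ℤ → ℂ) (hw0 : w 0 = a) (hw1 : w 1 = b)
    (hw : ∀ j : ℤ, w j = w (j - 1) - q * w (j - 2)) :
    ∀ s : ℕ,
      ((b - a * ((1 - δ) / 2)) / δ) * eulerianPolyC s ((1 + δ) / 2)
          + ((a * ((1 + δ) / 2) - b) / δ) * eulerianPolyC s ((1 - δ) / 2) =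
        ∑ t ∈ Finset.range (s + 1), (eulerianA s t : ℂ) * w t ∧
      ((b - a * ((1 - δ) / 2)) / δ) * eulerianPolyC s ((1 + δ) / 2)
          - ((a * ((1 + δ) / 2) - b) / δ) * eulerianPolyC s ((1 - δ) / 2) =
        (1 / δ) * ∑ t ∈ Finset.range (s + 1), (eulerianA s t : ℂ) * (w ((t : ℤ) + 1) - q * w ((t : ℤ) - 1)) := by
  intro s
  set τ : ℂ := (1 + δ) / 2
  set σ : ℂ := (1 - δ) / 2
  have hsub : τ - σ = δ := by ring
  have hτσ : τ ≠ σ := sub_ne_zero.mp (hsub ▸ hδ0)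
  have hadd : τ + σ = 1 := by ring
  have hmul : τ * σ = q := by linear_combination (-1 / 4 : ℂ) * hδ
  constructor
  · rw [mul_eulerianPolyC_add_mul_eulerianPolyC]
    refine Finset.sum_congr rfl fun t _ => ?_
    rw [wstar_eq_binet hτσ hadd hmul hw, hw0, hw1, hsub]
  · rw [sub_eq_add_neg, ← neg_mul, mul_eulerianPolyC_add_mul_eulerianPolyC, Finset.mul_sum]
    refine Finset.sum_congr rfl fun t _ => ?_
    rw [wstar_add_one_sub_mul_wstar_sub_one hτσ hadd hmul hw, hw0, hw1]
    field_simp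
    ring

theorem eulerian_poly_wstar_identities (a b q δ : ℂ) (hq : q ≠ 0)
    (hδ : δ ^ 2 = 1 - 4 * q) (hδ0 : δ ≠ 0)
    (w : ℤ → ℂ) (hw0 : w 0 = a) (hw1 : w 1 = b)
    (hw : ∀ j : ℤ, w j = w (j - 1) - q * w (j - 2)) :
    ∀ s : ℕ,
      ((b - a * ((1 - δ) / 2)) / δ) * eulerianPolyC s ((1 + δ) / 2)
          + ((a * ((1 + δ) / 2) - b) / δ) * eulerianPolyC s ((1 - δ) / 2) =
        ∑ t ∈ Finset.range (s + 1), (eulerianA s t : ℂ) * w t ∧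
      ((b - a * ((1 - δ) / 2)) / δ) * eulerianPolyC s ((1 + δ) / 2)
          - ((a * ((1 + δ) / 2) - b) / δ) * eulerianPolyC s ((1 - δ) / 2) =
        (1 / δ) * ∑ t ∈ Finset.range (s + 1), (eulerianA s t : ℂ) * (w ((t : ℤ) + 1) - q * w ((t : ℤ) - 1)) :=
  eulerian_poly_wstar_identities_general a b q δ hδ hδ0 w hw0 hw1 hw
end

section
/- Let q be a nonzero complex number, let \delta be a complex number with \delta^2 = 1 - 4q and \delta \neq 0, and set \tau = (1+\delta)/2, \sigma = (1-\delta)/2, \Delta = \delta, \mathbb{A} = (b - a\sigma)/\Delta, \mathbb{B} = (a\tau - b)/\Delta, where a, b are complex numbers. Then for all nonnegative integers r and s: \mathbb{A} \tau^r A_s(\tau) + \mathbb{B} \sigma^r A_s(\sigma) = (v_r/2) \sum_{t=0}^{s} A(s,t) w^*_t + (u_r/2) \sum_{t=0}^{s} A(s,t) (w^*_{t+1} - q w^*_{t-1}). -/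
/-!
With `τ, σ` the roots of `x² - x + q`, every solution of `w_j = w_{j-1} - q w_{j-2}` satisfies
the Binet formula `w_n = 𝔸 τ^n + 𝔹 σ^n`; in particular `v_n = τ^n + σ^n` and `Δ u_n = τ^n - σ^n`.
Since `2τ - 1 = Δ = -(2σ - 1)`, also `w_{n+1} - q w_{n-1} = 2 w_{n+1} - w_n = Δ (𝔸 τ^n - 𝔹 σ^n)`.
Summing against the Eulerian numbers turns both sums of the right-hand side into combinations of
`X = 𝔸 A_s(τ)` and `Y = 𝔹 A_s(σ)`, and the identity becomes
`((τ^r + σ^r) (X + Y) + (τ^r - σ^r) (X - Y)) / 2 = τ^r X + σ^r Y`.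
-/

section Binet

variable {K : Type*} [Field K] {τ σ : K}

theorem sub_mul_eq_binet_of_recurrence {f : ℕ → K}
    (hf : ∀ n, f (n + 2) = (τ + σ) * f (n + 1) - τ * σ * f n) (n : ℕ) :
    (τ - σ) * f n = (f 1 - f 0 * σ) * τ ^ n + (f 0 * τ - f 1) * σ ^ n := by
  induction n using Nat.twoStepInduction with
  | zero => ring
  | one => ring
  | more n ih₀ ih₁ =>
    rw [hf, mul_sub, mul_left_comm, ih₁, mul_left_comm, ih₀]
    ring

theorem eq_binet_of_int_recurrence (hsum : τ + σ = 1) (hne : τ - σ ≠ 0) {f : ℤ → K}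
    (hf : ∀ j : ℤ, f j = f (j - 1) - τ * σ * f (j - 2)) (n : ℕ) :
    f n = (f 1 - f 0 * σ) / (τ - σ) * τ ^ n + (f 0 * τ - f 1) / (τ - σ) * σ ^ n := by
  have hrec : ∀ m : ℕ, f ↑(m + 2) = (τ + σ) * f ↑(m + 1) - τ * σ * f m := fun m => by
    rw [hsum, one_mul, hf]
    push_cast
    ring_nf
  have := sub_mul_eq_binet_of_recurrence (f := fun m : ℕ => f m) hrec n
  simp only [Nat.cast_zero, Nat.cast_one] at this
  field_simp
  linear_combination this

end Binet

theorem sum_eulerianA_mul_binet (s : ℕ) (A B τ σ : ℂ) :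
    ∑ t ∈ Finset.range (s + 1), (eulerianA s t : ℂ) * (A * τ ^ t + B * σ ^ t) =
      A * eulerianPolyC s τ + B * eulerianPolyC s σ := by
  simp only [eulerianPolyC, Finset.mul_sum, ← Finset.sum_add_distrib]
  exact Finset.sum_congr rfl fun t _ => by ring

theorem eulerian_poly_wstar_power_identity_general (a b q δ : ℂ)
    (hδ : δ ^ 2 = 1 - 4 * q) (hδ0 : δ ≠ 0)
    (w : ℤ → ℂ) (hw0 : w 0 = a) (hw1 : w 1 = b)
    (hw : ∀ j : ℤ, w j = w (j - 1) - q * w (j - 2))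
    (u : ℤ → ℂ) (hu0 : u 0 = 0) (hu1 : u 1 = 1)
    (hu : ∀ j : ℤ, u j = u (j - 1) - q * u (j - 2))
    (v : ℤ → ℂ) (hv0 : v 0 = 2) (hv1 : v 1 = 1)
    (hv : ∀ j : ℤ, v j = v (j - 1) - q * v (j - 2)) :
    ∀ r s : ℕ,
      ((b - a * ((1 - δ) / 2)) / δ) * ((1 + δ) / 2) ^ r * eulerianPolyC s ((1 + δ) / 2)
          + ((a * ((1 + δ) / 2) - b) / δ) * ((1 - δ) / 2) ^ r * eulerianPolyC s ((1 - δ) / 2) =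
        (v r / 2) * (∑ t ∈ Finset.range (s + 1), (eulerianA s t : ℂ) * w t)
          + (u r / 2) * ∑ t ∈ Finset.range (s + 1), (eulerianA s t : ℂ) *
              (w ((t : ℤ) + 1) - q * w ((t : ℤ) - 1)) := by
  intro r s
  set τ : ℂ := (1 + δ) / 2
  set σ : ℂ := (1 - δ) / 2
  set A : ℂ := (b - a * σ) / δ
  set B : ℂ := (a * τ - b) / δ
  have hsum : τ + σ = 1 := by ring
  have hdiff : τ - σ = δ := by ring
  have hprod : τ * σ = q := by linear_combination -hδ / 4
  have binet := fun f hf => eq_binet_of_int_recurrence hsum (hdiff ▸ hδ0) (f := f) (hprod ▸ hf)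
  have hw_binet : ∀ n : ℕ, w n = A * τ ^ n + B * σ ^ n := by
    simpa only [hw0, hw1, hdiff] using binet w hw
  have hu_binet : u r = (τ ^ r - σ ^ r) / δ := by
    rw [binet u hu, hu0, hu1, hdiff]; ring
  have hv_binet : v r = τ ^ r + σ ^ r := by
    rw [binet v hv, hv0, hv1, hdiff]
    field_simp
    ring
  have hw_shift : ∀ t : ℕ, w ((t : ℤ) + 1) - q * w ((t : ℤ) - 1) =
      δ * A * τ ^ t + (-(δ * B)) * σ ^ t := fun t => by
    have hrec := hw ((t : ℤ) + 1)
    have ht1 := hw_binet (t + 1)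
    rw [add_sub_cancel_right, show (t : ℤ) + 1 - 2 = t - 1 by ring] at hrec
    push_cast at ht1
    linear_combination -hrec + 2 * ht1 - hw_binet t
  simp only [hw_binet, hw_shift, sum_eulerianA_mul_binet, hu_binet, hv_binet]
  field_simp
  ring

theorem eulerian_poly_wstar_power_identity (a b q δ : ℂ) (hq : q ≠ 0)
    (hδ : δ ^ 2 = 1 - 4 * q) (hδ0 : δ ≠ 0)
    (w : ℤ → ℂ) (hw0 : w 0 = a) (hw1 : w 1 = b)
    (hw : ∀ j : ℤ, w j = w (j - 1) - q * w (j - 2))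
    (u : ℤ → ℂ) (hu0 : u 0 = 0) (hu1 : u 1 = 1)
    (hu : ∀ j : ℤ, u j = u (j - 1) - q * u (j - 2))
    (v : ℤ → ℂ) (hv0 : v 0 = 2) (hv1 : v 1 = 1)
    (hv : ∀ j : ℤ, v j = v (j - 1) - q * v (j - 2)) :
    ∀ r s : ℕ,
      ((b - a * ((1 - δ) / 2)) / δ) * ((1 + δ) / 2) ^ r * eulerianPolyC s ((1 + δ) / 2)
          + ((a * ((1 + δ) / 2) - b) / δ) * ((1 - δ) / 2) ^ r * eulerianPolyC s ((1 - δ) / 2) =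
        (v r / 2) * (∑ t ∈ Finset.range (s + 1), (eulerianA s t : ℂ) * w t)
          + (u r / 2) * ∑ t ∈ Finset.range (s + 1), (eulerianA s t : ℂ) *
              (w ((t : ℤ) + 1) - q * w ((t : ℤ) - 1)) :=
  eulerian_poly_wstar_power_identity_general a b q δ hδ hδ0 w hw0 hw1 hw u hu0 hu1 hu v hv0 hv1 hv
end

section
/- Let q be a nonzero complex number, let \delta be a complex number with \delta^2 = 1 - 4q, and set \tau = (1+\delta)/2, \sigma = (1-\delta)/2, \Delta = \delta. Then for all nonnegative integers j and s: \tau^s A_j(\tau) - \sigma^s A_j(\sigma) = \Delta \sum_{t=0}^{j} A(j,t) u_{t+s} and \tau^s A_j(\tau) + \sigma^s A_j(\sigma) = \sum_{t=0}^{j} A(j,t) v_{t+s}. -/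
/-!
With `τ = (1 + δ)/2` and `σ = (1 - δ)/2` the two roots of `x² = x - q`, the Binet formulas
`δ u_n = τⁿ - σⁿ` and `v_n = τⁿ + σⁿ` hold for `n ≥ 0`, since both sides satisfy the same
two-term recurrence with the same initial values. Expanding `τˢ A_j(τ) = ∑_t A(j,t) τ^(t+s)`
and likewise for `σ`, the identities follow term by term.
-/

theorem binet_of_recurrence {R : Type*} [CommRing R] {f : ℤ → R} {q τ σ c α β : R}
    (hf : ∀ j : ℤ, f j = f (j - 1) - q * f (j - 2))
    (hτ : τ ^ 2 = τ - q) (hσ : σ ^ 2 = σ - q)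
    (h0 : c * f 0 = α + β) (h1 : c * f 1 = α * τ + β * σ) (n : ℕ) :
    c * f n = α * τ ^ n + β * σ ^ n := by
  suffices h : ∀ m : ℕ, c * f m = α * τ ^ m + β * σ ^ m ∧
      c * f (m + 1 : ℕ) = α * τ ^ (m + 1) + β * σ ^ (m + 1) from (h n).1
  intro m
  induction m with
  | zero => exact ⟨by simpa using h0, by simpa using h1⟩
  | succ m ih =>
    refine ⟨ih.2, ?_⟩
    have hrec : f (m + 2 : ℕ) = f (m + 1 : ℕ) - q * f m := by
      rw [hf]; push_cast; ring_nf
    rw [hrec]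
    linear_combination ih.2 - q * ih.1 - α * τ ^ m * hτ - β * σ ^ m * hσ

theorem sq_half_one_add_eq {K : Type*} [Field K] [NeZero (2 : K)] {q δ : K}
    (hδ : δ ^ 2 = 1 - 4 * q) : ((1 + δ) / 2) ^ 2 = (1 + δ) / 2 - q := by
  field_simp
  linear_combination hδ

theorem sq_half_one_sub_eq {K : Type*} [Field K] [NeZero (2 : K)] {q δ : K}
    (hδ : δ ^ 2 = 1 - 4 * q) : ((1 - δ) / 2) ^ 2 = (1 - δ) / 2 - q := by
  field_simp
  linear_combination hδ

theorem pow_mul_eulerianPolyC (j s : ℕ) (x : ℂ) :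
    x ^ s * eulerianPolyC j x = ∑ t ∈ Finset.range (j + 1), (eulerianA j t : ℂ) * x ^ (t + s) := by
  rw [eulerianPolyC, Finset.mul_sum]
  exact Finset.sum_congr rfl fun t _ => by ring

theorem eulerian_sum_of_binet {f : ℤ → ℂ} {τ σ c α β : ℂ}
    (hbinet : ∀ n : ℕ, c * f n = α * τ ^ n + β * σ ^ n) (j s : ℕ) :
    α * (τ ^ s * eulerianPolyC j τ) + β * (σ ^ s * eulerianPolyC j σ) =
      c * ∑ t ∈ Finset.range (j + 1), (eulerianA j t : ℂ) * f (t + s) := by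
  simp only [pow_mul_eulerianPolyC, Finset.mul_sum, ← Finset.sum_add_distrib]
  refine Finset.sum_congr rfl fun t _ => ?_
  have h := hbinet (t + s)
  push_cast at h
  linear_combination -(eulerianA j t : ℂ) * h

theorem eulerian_poly_uv_identities_general (q δ : ℂ) (hδ : δ ^ 2 = 1 - 4 * q)
    (u : ℤ → ℂ) (hu0 : u 0 = 0) (hu1 : u 1 = 1)
    (hu : ∀ j : ℤ, u j = u (j - 1) - q * u (j - 2))
    (v : ℤ → ℂ) (hv0 : v 0 = 2) (hv1 : v 1 = 1)
    (hv : ∀ j : ℤ, v j = v (j - 1) - q * v (j - 2)) :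
    ∀ j s : ℕ,
      ((1 + δ) / 2) ^ s * eulerianPolyC j ((1 + δ) / 2)
          - ((1 - δ) / 2) ^ s * eulerianPolyC j ((1 - δ) / 2) =
        δ * ∑ t ∈ Finset.range (j + 1), (eulerianA j t : ℂ) * u (t + s) ∧
      ((1 + δ) / 2) ^ s * eulerianPolyC j ((1 + δ) / 2)
          + ((1 - δ) / 2) ^ s * eulerianPolyC j ((1 - δ) / 2) =
        ∑ t ∈ Finset.range (j + 1), (eulerianA j t : ℂ) * v (t + s) := by
  intro j s
  have hτ := sq_half_one_add_eq hδ
  have hσ := sq_half_one_sub_eq hδ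
  have hu_binet := binet_of_recurrence (c := δ) (α := 1) (β := -1) hu hτ hσ
    (by rw [hu0]; ring) (by rw [hu1]; ring)
  have hv_binet := binet_of_recurrence (c := 1) (α := 1) (β := 1) hv hτ hσ
    (by rw [hv0]; ring) (by rw [hv1]; ring)
  constructor
  · linear_combination eulerian_sum_of_binet hu_binet j s
  · linear_combination eulerian_sum_of_binet hv_binet j s

theorem eulerian_poly_uv_identities (q δ : ℂ) (hq : q ≠ 0) (hδ : δ ^ 2 = 1 - 4 * q)
    (u : ℤ → ℂ) (hu0 : u 0 = 0) (hu1 : u 1 = 1)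
    (hu : ∀ j : ℤ, u j = u (j - 1) - q * u (j - 2))
    (v : ℤ → ℂ) (hv0 : v 0 = 2) (hv1 : v 1 = 1)
    (hv : ∀ j : ℤ, v j = v (j - 1) - q * v (j - 2)) :
    ∀ j s : ℕ,
      ((1 + δ) / 2) ^ s * eulerianPolyC j ((1 + δ) / 2)
          - ((1 - δ) / 2) ^ s * eulerianPolyC j ((1 - δ) / 2) =
        δ * ∑ t ∈ Finset.range (j + 1), (eulerianA j t : ℂ) * u (t + s) ∧
      ((1 + δ) / 2) ^ s * eulerianPolyC j ((1 + δ) / 2)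
          + ((1 - δ) / 2) ^ s * eulerianPolyC j ((1 - δ) / 2) =
        ∑ t ∈ Finset.range (j + 1), (eulerianA j t : ℂ) * v (t + s) :=
  eulerian_poly_uv_identities_general q δ hδ u hu0 hu1 hu v hv0 hv1 hv
end
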